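/- arXiv:2310.18658 — 2 statements merged into one kernel-verified Lean document; each statement's English description precedes it below -/
import Mathlib

section
/- Let f_X: ℝ^m → ℝ be twice continuously differentiable at q, and K a bounded symmetric compactly supported probability density with ∫tK(t)dt = 0 and κ₂ = ∫t²K(t)dt < ∞. With Δ_n = ∏_j δ_{n,j} and δ_{n,j} → 0, the bias of the kernel density estimator satisfies (1/Δ_n)∫_{ℝ^m} ∏_j K((q_j − x_j)/δ_{n,j}) f_X(x) dx − f_X(q) = (κ₂/2) Σ_{j=1}^m δ_{n,j}² ∂²f_X/∂x_j²(q) + Σ_j o(δ_{n,j}²) as n → ∞. -/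
/-!
Substituting `x = q - δ ⊙ t` turns the normalised kernel integral into `∫ P(t) f(q - δ ⊙ t) dt`,
where the weight `P(t) = ∏ⱼ K(tⱼ)` has compact support, total mass one, vanishing first moments
and second-moment matrix `κ₂ I`. Against `P`, the second-order Taylor polynomial of `f` at `q` integrates to
`f(q) + (κ₂/2) Σⱼ δⱼ² ∂ⱼ²f(q)`, while the Taylor remainder is `o(‖δ ⊙ t‖²)` uniformly on the
bounded support of `P`, hence contributes `o(‖δ‖²) = o(Σⱼ δⱼ²)`.
-/

open MeasureTheory Filter Asymptotics Topology

theorem ContDiffAt.isLittleO_sub_taylor_two {E F : Type*} [NormedAddCommGroup E] [NormedSpace ℝ E]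
    [NormedAddCommGroup F] [NormedSpace ℝ F] {f : E → F} {q : E} (hf : ContDiffAt ℝ 2 f q) :
    (fun x => f x - f q - fderiv ℝ f q (x - q)
        - (1 / 2 : ℝ) • fderiv ℝ (fderiv ℝ f) q (x - q) (x - q)) =o[𝓝 q]
      fun x => ‖x - q‖ ^ 2 := by
  set B := fderiv ℝ (fderiv ℝ f) q
  have hB : HasFDerivAt (fderiv ℝ f) B q :=
    ((hf.fderiv_right (m := 1) (by norm_num)).differentiableAt (by norm_num)).hasFDerivAt
  have hsymm : ∀ v w, B v w = B w v := hf.isSymmSndFDerivAt (by simp)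
  obtain ⟨r, hr, hdiff⟩ := Metric.eventually_nhds_iff_ball.1 <|
    (hf.eventually (by simp)).mono fun x hx => hx.differentiableAt (n := 2) (by simp)
  have hderiv : ∀ x ∈ Metric.ball q r, HasFDerivWithinAt
      (fun x => f x - f q - fderiv ℝ f q (x - q) - (1 / 2 : ℝ) • B (x - q) (x - q))
      (fderiv ℝ f x - fderiv ℝ f q - B (x - q)) (Metric.ball q r) x := by
    intro x hx
    have hsub := (hasFDerivAt_id (𝕜 := ℝ) x).sub_const q
    have hquad := (B.hasFDerivAt_of_bilinear hsub hsub).const_smul (1 / 2 : ℝ)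
    refine ((((hdiff x hx).hasFDerivAt.sub_const (f q)).sub
      ((fderiv ℝ f q).hasFDerivAt.comp x hsub)).sub hquad).hasFDerivWithinAt.congr_fderiv ?_
    ext v
    simp [hsymm v x, hsymm v q]
    module
  have hderiv_small : (fun x => fderiv ℝ f x - fderiv ℝ f q - B (x - q)) =o[𝓝[Metric.ball q r] q]
      fun x => ‖x - q‖ ^ 1 := by
    simpa only [pow_one] using (hasFDerivAt_iff_isLittleO.1 hB).norm_right.mono nhdsWithin_le_nhds
  have := (convex_ball q r).isLittleO_pow_succ (Metric.mem_ball_self hr) hderiv hderiv_small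
  rw [nhdsWithin_eq_nhds.2 (Metric.ball_mem_nhds q hr)] at this
  simpa using this

theorem ContDiffAt.deriv_deriv_update {ι F : Type*} [Fintype ι] [DecidableEq ι]
    [NormedAddCommGroup F] [NormedSpace ℝ F] {f : (ι → ℝ) → F} {q : ι → ℝ}
    (hf : ContDiffAt ℝ 2 f q) (j : ι) :
    deriv (deriv fun t => f (Function.update q j t)) (q j) =
      fderiv ℝ (fderiv ℝ f) q (Pi.single j 1) (Pi.single j 1) := by
  have hB : HasFDerivAt (fderiv ℝ f) (fderiv ℝ (fderiv ℝ f) q) q :=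
    ((hf.fderiv_right (m := 1) (by norm_num)).differentiableAt (by norm_num)).hasFDerivAt
  have hupdate : Tendsto (Function.update q j) (𝓝 (q j)) (𝓝 q) := by
    simpa using (hasDerivAt_update q j (q j)).continuousAt.tendsto
  have hderiv : deriv (fun t => f (Function.update q j t)) =ᶠ[𝓝 (q j)]
      fun t => fderiv ℝ f (Function.update q j t) (Pi.single j 1) := by
    filter_upwards [hupdate.eventually (hf.eventually (by simp))] with t ht
    exact ((ht.differentiableAt (n := 2) (by simp)).hasFDerivAt.comp_hasDerivAt t
      (hasDerivAt_update q j t)).deriv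
  rw [hderiv.deriv_eq]
  have := (by simpa using hB : HasFDerivAt (fderiv ℝ f) (fderiv ℝ (fderiv ℝ f) q)
    (Function.update q j (q j))).comp_hasDerivAt (q j) (hasDerivAt_update q j (q j))
  exact (this.clm_apply (hasDerivAt_const _ _)).deriv.trans (by simp)

section ChangeOfVariables
variable {ι F : Type*}

lemma bijective_sub_mul (q : ι → ℝ) {c : ι → ℝ} (hc : ∀ i, c i ≠ 0) :
    Function.Bijective fun t : ι → ℝ => q - c * t := by
  refine ⟨fun t s h => funext fun i => by simpa [hc i] using congrFun h i, fun x => ?_⟩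
  exact ⟨fun i => (q i - x i) / c i, by ext i; simp [mul_div_cancel₀ _ (hc i)]⟩

variable [Fintype ι] [NormedAddCommGroup F] [NormedSpace ℝ F]

lemma exists_hasFDerivAt_sub_mul (q c : ι → ℝ) :
    ∃ A : (ι → ℝ) →L[ℝ] ι → ℝ, |A.det| = |∏ i, c i| ∧
      ∀ t, HasFDerivAt (fun t => q - c * t) A t := by
  classical
  set A := LinearMap.toContinuousLinearMap (Matrix.toLin' (Matrix.diagonal (-c)))
  have hA : (fun t => q - c * t) = fun t => q + A t := by
    ext t i
    simp [A, sub_eq_add_neg, Matrix.mulVec_diagonal]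
  refine ⟨A, by simp [A, ContinuousLinearMap.det, Finset.abs_prod], fun t => ?_⟩
  rw [hA]
  exact A.hasFDerivAt.const_add q

lemma integral_comp_sub_mul (q : ι → ℝ) {c : ι → ℝ} (hc : ∀ i, c i ≠ 0) (g : (ι → ℝ) → F) :
    ∫ x, g x = |∏ i, c i| • ∫ t, g (q - c * t) := by
  obtain ⟨A, hdet, hA⟩ := exists_hasFDerivAt_sub_mul q c
  have := integral_image_eq_integral_abs_det_fderiv_smul volume MeasurableSet.univ
    (fun t _ => (hA t).hasFDerivWithinAt) (bijective_sub_mul q hc).injective.injOn g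
  rw [Set.image_univ_of_surjective (bijective_sub_mul q hc).surjective,
    Measure.restrict_univ] at this
  rw [this, integral_smul, hdet]

lemma integrable_comp_sub_mul_iff (q : ι → ℝ) {c : ι → ℝ} (hc : ∀ i, c i ≠ 0)
    (g : (ι → ℝ) → F) :
    Integrable (fun t => g (q - c * t)) ↔ Integrable g := by
  obtain ⟨A, hdet, hA⟩ := exists_hasFDerivAt_sub_mul q c
  have := integrableOn_image_iff_integrableOn_abs_det_fderiv_smul volume MeasurableSet.univ
    (fun t _ => (hA t).hasFDerivWithinAt) (bijective_sub_mul q hc).injective.injOn g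
  rw [Set.image_univ_of_surjective (bijective_sub_mul q hc).surjective, integrableOn_univ,
    integrableOn_univ, hdet, integrable_fun_smul_iff] at this
  · exact this.symm
  · simpa [Finset.prod_eq_zero_iff] using hc

end ChangeOfVariables

lemma map_eq_sum_smul_single {ι R M F : Type*} [Fintype ι] [DecidableEq ι] [Semiring R]
    [AddCommMonoid M] [Module R M] [FunLike F (ι → R) M] [LinearMapClass F R (ι → R) M]
    (f : F) (v : ι → R) :
    f v = ∑ j, v j • f (Pi.single j 1) := by
  conv_lhs => rw [← Finset.univ_sum_single v]
  simp only [map_sum, ← map_smul, ← Pi.single_smul', smul_eq_mul, mul_one]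

lemma clm_mul_eq_sum {ι : Type*} [Fintype ι] [DecidableEq ι] (L : (ι → ℝ) →L[ℝ] ℝ)
    (c t : ι → ℝ) :
    L (c * t) = ∑ j, c j * L (Pi.single j 1) * t j := by
  rw [map_eq_sum_smul_single L]
  refine Finset.sum_congr rfl fun j _ => ?_
  simp only [Pi.mul_apply, smul_eq_mul]
  ring

lemma bilin_mul_mul_eq_sum {ι : Type*} [Fintype ι] [DecidableEq ι]
    (B : (ι → ℝ) →L[ℝ] (ι → ℝ) →L[ℝ] ℝ) (c t : ι → ℝ) :
    B (c * t) (c * t) =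
      ∑ j, ∑ l, c j * c l * B (Pi.single j 1) (Pi.single l 1) * (t j * t l) := by
  rw [map_eq_sum_smul_single B, FunLike.coe_sum, Finset.sum_apply]
  refine Finset.sum_congr rfl fun j _ => ?_
  rw [FunLike.coe_smul, Pi.smul_apply, clm_mul_eq_sum, Finset.smul_sum]
  refine Finset.sum_congr rfl fun l _ => ?_
  simp only [Pi.mul_apply, smul_eq_mul]
  ring

section ProductKernel
variable {ι : Type*} [Fintype ι] {K : ℝ → ℝ}

lemma MeasureTheory.Integrable.pow_mul_of_hasCompactSupport (hK : Integrable K)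
    (hsupp : HasCompactSupport K) (n : ℕ) : Integrable fun s => s ^ n * K s :=
  (integrableOn_iff_integrable_of_support_subset fun _ hs =>
    subset_tsupport K (right_ne_zero_of_mul hs)).1 <|
    hK.integrableOn.continuousOn_mul (continuous_pow n).continuousOn hsupp

lemma integral_prod_pow_mul (K : ℝ → ℝ) (k : ι → ℕ) :
    ∫ t : ι → ℝ, ∏ i, t i ^ k i * K (t i) = ∏ i, ∫ s, s ^ k i * K s := by
  rw [volume_pi]
  exact integral_fintype_prod_eq_prod fun i s => s ^ k i * K s

lemma integrable_prod_pow_mul (hK : ∀ n : ℕ, Integrable fun s => s ^ n * K s) (k : ι → ℕ) :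
    Integrable fun t : ι → ℝ => ∏ i, t i ^ k i * K (t i) :=
  Integrable.fintype_prod fun i => hK (k i)

lemma mul_prod_eq_prod_pow_single_mul [DecidableEq ι] (K : ℝ → ℝ) (t : ι → ℝ) (j : ι) :
    t j * ∏ i, K (t i) = ∏ i, t i ^ (Pi.single j 1 : ι → ℕ) i * K (t i) := by
  rw [Finset.prod_mul_distrib]
  congr 1
  simp [Pi.single_apply, pow_ite]

lemma mul_mul_prod_eq_prod_pow_single_mul [DecidableEq ι] (K : ℝ → ℝ) (t : ι → ℝ) (j l : ι) :
    t j * t l * ∏ i, K (t i) =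
      ∏ i, t i ^ (Pi.single j 1 + Pi.single l 1 : ι → ℕ) i * K (t i) := by
  rw [Finset.prod_mul_distrib]
  congr 1
  simp only [Pi.add_apply, pow_add, Finset.prod_mul_distrib]
  simp [Pi.single_apply, pow_ite]

lemma prod_kernel_mul_clm_eq_sum [DecidableEq ι] (L : (ι → ℝ) →L[ℝ] ℝ) (c t : ι → ℝ) :
    (∏ i, K (t i)) * L (c * t) = ∑ j, c j * L (Pi.single j 1) * (t j * ∏ i, K (t i)) := by
  rw [clm_mul_eq_sum, Finset.mul_sum]
  exact Finset.sum_congr rfl fun j _ => by ring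

lemma prod_kernel_mul_bilin_eq_sum [DecidableEq ι] (B : (ι → ℝ) →L[ℝ] (ι → ℝ) →L[ℝ] ℝ)
    (c t : ι → ℝ) :
    (∏ i, K (t i)) * B (c * t) (c * t) = ∑ j, ∑ l,
      c j * c l * B (Pi.single j 1) (Pi.single l 1) * (t j * t l * ∏ i, K (t i)) := by
  rw [bilin_mul_mul_eq_sum, Finset.mul_sum]
  refine Finset.sum_congr rfl fun j _ => ?_
  rw [Finset.mul_sum]
  exact Finset.sum_congr rfl fun l _ => by ring

lemma integral_prod_kernel (hK₁ : ∫ s, K s = 1) : ∫ t : ι → ℝ, ∏ i, K (t i) = 1 := by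
  simpa [hK₁] using integral_prod_pow_mul (ι := ι) K 0

lemma integral_mul_prod_kernel [DecidableEq ι] (hK₀ : ∫ s, s * K s = 0) (j : ι) :
    ∫ t : ι → ℝ, t j * ∏ i, K (t i) = 0 := by
  simp_rw [mul_prod_eq_prod_pow_single_mul K _ j, integral_prod_pow_mul]
  exact Finset.prod_eq_zero (Finset.mem_univ j) (by simpa using hK₀)

lemma integral_mul_mul_prod_kernel [DecidableEq ι] (hK₁ : ∫ s, K s = 1) (hK₀ : ∫ s, s * K s = 0)
    (j l : ι) :
    ∫ t : ι → ℝ, t j * t l * ∏ i, K (t i) = if j = l then ∫ s, s ^ 2 * K s else 0 := by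
  simp_rw [mul_mul_prod_eq_prod_pow_single_mul K _ j l, integral_prod_pow_mul]
  split_ifs with h
  · subst h
    rw [Fintype.prod_eq_single j fun i hi => by simp [hi, hK₁]]
    simp
  · exact Finset.prod_eq_zero (Finset.mem_univ j) (by simpa [h] using hK₀)

section
variable (hK : ∀ n : ℕ, Integrable fun s => s ^ n * K s)
include hK

lemma integrable_prod_kernel : Integrable fun t : ι → ℝ => ∏ i, K (t i) := by
  simpa using integrable_prod_pow_mul hK 0

lemma integrable_mul_prod_kernel [DecidableEq ι] (j : ι) :
    Integrable fun t : ι → ℝ => t j * ∏ i, K (t i) := by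
  simp_rw [mul_prod_eq_prod_pow_single_mul K _ j]
  exact integrable_prod_pow_mul hK _

lemma integrable_mul_mul_prod_kernel [DecidableEq ι] (j l : ι) :
    Integrable fun t : ι → ℝ => t j * t l * ∏ i, K (t i) := by
  simp_rw [mul_mul_prod_eq_prod_pow_single_mul K _ j l]
  exact integrable_prod_pow_mul hK _

lemma integrable_prod_kernel_mul_clm [DecidableEq ι] (L : (ι → ℝ) →L[ℝ] ℝ) (c : ι → ℝ) :
    Integrable fun t : ι → ℝ => (∏ i, K (t i)) * L (c * t) := by
  simp_rw [prod_kernel_mul_clm_eq_sum]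
  exact integrable_finsetSum _ fun j _ => (integrable_mul_prod_kernel hK j).const_mul _

lemma integrable_prod_kernel_mul_bilin [DecidableEq ι] (B : (ι → ℝ) →L[ℝ] (ι → ℝ) →L[ℝ] ℝ)
    (c : ι → ℝ) :
    Integrable fun t : ι → ℝ => (∏ i, K (t i)) * B (c * t) (c * t) := by
  simp_rw [prod_kernel_mul_bilin_eq_sum]
  exact integrable_finsetSum _ fun j _ => integrable_finsetSum _ fun l _ =>
    (integrable_mul_mul_prod_kernel hK j l).const_mul _

lemma integral_prod_kernel_mul_clm [DecidableEq ι] (hK₀ : ∫ s, s * K s = 0) (L : (ι → ℝ) →L[ℝ] ℝ)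
    (c : ι → ℝ) :
    ∫ t : ι → ℝ, (∏ i, K (t i)) * L (c * t) = 0 := by
  simp_rw [prod_kernel_mul_clm_eq_sum]
  rw [integral_finsetSum _ fun j _ => (integrable_mul_prod_kernel hK j).const_mul _]
  simp [integral_const_mul, integral_mul_prod_kernel hK₀]

lemma integral_prod_kernel_mul_bilin [DecidableEq ι] (hK₁ : ∫ s, K s = 1) (hK₀ : ∫ s, s * K s = 0)
    (B : (ι → ℝ) →L[ℝ] (ι → ℝ) →L[ℝ] ℝ) (c : ι → ℝ) :
    ∫ t : ι → ℝ, (∏ i, K (t i)) * B (c * t) (c * t) =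
      (∫ s, s ^ 2 * K s) * ∑ j, c j ^ 2 * B (Pi.single j 1) (Pi.single j 1) := by
  simp_rw [prod_kernel_mul_bilin_eq_sum]
  rw [integral_finsetSum _ fun j _ => integrable_finsetSum _ fun l _ =>
    (integrable_mul_mul_prod_kernel hK j l).const_mul _, Finset.mul_sum]
  refine Finset.sum_congr rfl fun j _ => ?_
  rw [integral_finsetSum _ fun l _ => (integrable_mul_mul_prod_kernel hK j l).const_mul _]
  simp [integral_const_mul, integral_mul_mul_prod_kernel hK₁ hK₀]
  ring

end

lemma isBounded_support_prod (hK : Bornology.IsBounded (Function.support K)) :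
    Bornology.IsBounded (Function.support fun t : ι → ℝ => ∏ i, K (t i)) :=
  (Bornology.IsBounded.pi fun _ => hK).subset fun _ ht i _ =>
    Finset.prod_ne_zero_iff.1 ht i (Finset.mem_univ i)

lemma one_div_prod_mul_integral_prod_div_mul (q : ι → ℝ) {c : ι → ℝ} (hc : ∀ i, 0 < c i)
    (f : (ι → ℝ) → ℝ) :
    (1 / ∏ i, c i) * ∫ x, (∏ i, K ((q i - x i) / c i)) * f x =
      ∫ t, (∏ i, K (t i)) * f (q - c * t) := by
  have hprod : 0 < ∏ i, c i := Finset.prod_pos fun i _ => hc i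
  rw [integral_comp_sub_mul q (fun i => (hc i).ne'), abs_of_pos hprod, smul_eq_mul, one_div,
    inv_mul_cancel_left₀ hprod.ne']
  congr with t
  simp [mul_div_cancel_left₀ _ (hc _).ne']

lemma integrable_prod_mul_comp_sub_mul (hK : Integrable K) {C : ℝ} (hC : ∀ s, |K s| ≤ C)
    {f : (ι → ℝ) → ℝ} (hf : Integrable f) (q : ι → ℝ) {c : ι → ℝ} (hc : ∀ i, c i ≠ 0) :
    Integrable fun t => (∏ i, K (t i)) * f (q - c * t) :=
  ((integrable_comp_sub_mul_iff q hc f).2 hf).bdd_mul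
    (Integrable.fintype_prod fun _ => hK).aestronglyMeasurable <| ae_of_all _ fun t => by
      rw [norm_prod]
      exact Finset.prod_le_prod (fun _ _ => norm_nonneg _) fun i _ => hC (t i)

lemma integral_prod_mul_sub_taylor [DecidableEq ι] (hK : ∀ n : ℕ, Integrable fun s => s ^ n * K s)
    (hK₁ : ∫ s, K s = 1) (hK₀ : ∫ s, s * K s = 0) {f : (ι → ℝ) → ℝ} (q c : ι → ℝ)
    (L : (ι → ℝ) →L[ℝ] ℝ) (B : (ι → ℝ) →L[ℝ] (ι → ℝ) →L[ℝ] ℝ)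
    (hf : Integrable fun t => (∏ i, K (t i)) * f (q - c * t)) :
    ∫ t, (∏ i, K (t i)) * (f (q - c * t) - f q + L (c * t) - 1 / 2 * B (c * t) (c * t)) =
      (∫ t, (∏ i, K (t i)) * f (q - c * t)) - f q -
        (∫ s, s ^ 2 * K s) / 2 * ∑ j, c j ^ 2 * B (Pi.single j 1) (Pi.single j 1) := by
  have hP : Integrable fun t : ι → ℝ => ∏ i, K (t i) := integrable_prod_kernel hK
  have hL := integrable_prod_kernel_mul_clm hK L c
  have hB : Integrable fun t => (∏ i, K (t i)) * (1 / 2 * B (c * t) (c * t)) := by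
    simpa only [mul_left_comm (1 / 2 : ℝ)] using
      (integrable_prod_kernel_mul_bilin hK B c).const_mul (1 / 2)
  have hBval : ∫ t, (∏ i, K (t i)) * (1 / 2 * B (c * t) (c * t)) =
      1 / 2 * ((∫ s, s ^ 2 * K s) * ∑ j, c j ^ 2 * B (Pi.single j 1) (Pi.single j 1)) := by
    simp_rw [mul_left_comm _ (1 / 2 : ℝ)]
    rw [integral_const_mul, integral_prod_kernel_mul_bilin hK hK₁ hK₀]
  simp only [mul_sub, mul_add]
  rw [integral_sub ?_ hB, integral_add ?_ hL, integral_sub hf (hP.mul_const _),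
    integral_mul_const, integral_prod_kernel hK₁, integral_prod_kernel_mul_clm hK hK₀, hBval]
  · ring
  · exact hf.sub (hP.mul_const _)
  · exact (hf.sub (hP.mul_const _)).add hL

end ProductKernel

lemma isLittleO_integral_smul_comp_mul {A F α : Type*} [NormedRing A] [MeasurableSpace A]
    {μ : Measure A} [NormedAddCommGroup F] [NormedSpace ℝ F] {P : A → ℝ} (hP : Integrable P μ)
    (hPsupp : Bornology.IsBounded (Function.support P)) {R : A → F}
    (hR : R =o[𝓝 0] fun v => ‖v‖ ^ 2) {l : Filter α} {c : α → A} (hc : Tendsto c l (𝓝 0)) :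
    (fun n => ∫ t, P t • R (c n * t) ∂μ) =o[l] fun n => ‖c n‖ ^ 2 := by
  obtain ⟨ρ, hρ, hPρ⟩ := hPsupp.exists_pos_norm_le
  set M := ∫ t, ‖P t‖ ∂μ with hM
  rw [isLittleO_iff]
  intro ε hε
  have hε' : 0 < ε / (ρ ^ 2 * M + 1) := by positivity
  obtain ⟨η, hη, hRη⟩ := Metric.eventually_nhds_iff_ball.1 (isLittleO_iff.1 hR hε')
  filter_upwards [(tendsto_norm_zero.comp hc).eventually_lt_const (div_pos hη hρ)] with n hn
  have hbound : ∀ t, ‖P t • R (c n * t)‖ ≤ ε / (ρ ^ 2 * M + 1) * ρ ^ 2 * ‖c n‖ ^ 2 * ‖P t‖ := by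
    intro t
    by_cases ht : P t = 0
    · simp [ht]
    have htρ : ‖t‖ ≤ ρ := hPρ t ht
    have hct : ‖c n * t‖ ≤ ‖c n‖ * ρ :=
      (norm_mul_le _ _).trans (mul_le_mul_of_nonneg_left htρ (norm_nonneg _))
    have hmem : c n * t ∈ Metric.ball 0 η := by
      rw [mem_ball_zero_iff]
      exact hct.trans_lt ((lt_div_iff₀ hρ).1 hn)
    rw [norm_smul, mul_comm ‖P t‖]
    gcongr
    refine (hRη _ hmem).trans ?_
    rw [norm_pow, norm_norm, mul_assoc, ← mul_pow, mul_comm ρ]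
    gcongr
  calc ‖∫ t, P t • R (c n * t) ∂μ‖
      ≤ ∫ t, ε / (ρ ^ 2 * M + 1) * ρ ^ 2 * ‖c n‖ ^ 2 * ‖P t‖ ∂μ :=
        norm_integral_le_of_norm_le (hP.norm.const_mul _) (ae_of_all _ hbound)
    _ = ε * ‖c n‖ ^ 2 * (ρ ^ 2 * M / (ρ ^ 2 * M + 1)) := by
        rw [integral_const_mul, ← hM]; field_simp
    _ ≤ ε * ‖‖c n‖ ^ 2‖ := by
        rw [norm_pow, norm_norm]
        refine mul_le_of_le_one_right (by positivity) ?_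
        rw [div_le_one (by positivity)]
        linarith

lemma sq_norm_le_sum_sq {ι : Type*} [Fintype ι] (c : ι → ℝ) : ‖c‖ ^ 2 ≤ ∑ j, c j ^ 2 := by
  have hsum : 0 ≤ ∑ j, c j ^ 2 := Finset.sum_nonneg fun j _ => sq_nonneg _
  have : ‖c‖ ≤ √(∑ j, c j ^ 2) := (pi_norm_le_iff_of_nonneg (Real.sqrt_nonneg _)).2 fun j =>
    Real.abs_le_sqrt (Finset.single_le_sum (fun j _ => sq_nonneg (c j)) (Finset.mem_univ j))
  simpa [Real.sq_sqrt hsum] using pow_le_pow_left₀ (norm_nonneg c) this 2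

theorem stmt9_general {m : ℕ} (fX : (Fin m → ℝ) → ℝ) (q : Fin m → ℝ)
    (hfX : ContDiffAt ℝ 2 fX q)
    (hfXint : Integrable fX)
    (K : ℝ → ℝ)
    (hKbdd : ∃ C, ∀ t, |K t| ≤ C)
    (hKsupp : HasCompactSupport K)
    (hKone : (∫ t, K t) = 1)
    (hKodd : (∫ t, t * K t) = 0)
    (δ : ℕ → Fin m → ℝ) (hδpos : ∀ n j, 0 < δ n j)
    (hδ0 : ∀ j, Tendsto (fun n => δ n j) atTop (nhds 0)) :
    (fun n : ℕ =>
        ((1 / ∏ j, δ n j) *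
            (∫ x : Fin m → ℝ, (∏ j, K ((q j - x j) / δ n j)) * fX x) - fX q)
          - ((∫ t, t ^ 2 * K t) / 2) *
              ∑ j, (δ n j) ^ 2 *
                deriv (deriv (fun t => fX (Function.update q j t))) (q j))
      =o[atTop] (fun n => ∑ j, (δ n j) ^ 2) := by
  obtain ⟨C, hC⟩ := hKbdd
  have hKint : Integrable K := Integrable.of_integral_ne_zero (by simp [hKone])
  have hKmom := hKint.pow_mul_of_hasCompactSupport hKsupp
  set L := fderiv ℝ fX q
  set B := fderiv ℝ (fderiv ℝ fX) q
  set R : (Fin m → ℝ) → ℝ := fun v => fX (q - v) - fX q + L v - 1 / 2 * B v v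
  have hR : R =o[𝓝 0] fun v => ‖v‖ ^ 2 := by
    have hsub : Tendsto (fun v => q - v) (𝓝 0) (𝓝 q) := by
      simpa using (continuous_sub_left q).tendsto 0
    simpa only [R, Function.comp_def, sub_sub_cancel_left, map_neg, neg_apply,
      neg_neg, norm_neg, smul_eq_mul, sub_neg_eq_add] using
      hfX.isLittleO_sub_taylor_two.comp_tendsto hsub
  have hbias : ∀ n, ∫ t, (∏ i, K (t i)) • R (δ n * t) =
      ((1 / ∏ j, δ n j) * (∫ x : Fin m → ℝ, (∏ j, K ((q j - x j) / δ n j)) * fX x) - fX q)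
        - ((∫ t, t ^ 2 * K t) / 2) *
          ∑ j, (δ n j) ^ 2 * deriv (deriv (fun t => fX (Function.update q j t))) (q j) := by
    intro n
    simp_rw [one_div_prod_mul_integral_prod_div_mul q (hδpos n), hfX.deriv_deriv_update,
      smul_eq_mul]
    exact integral_prod_mul_sub_taylor hKmom hKone hKodd q (δ n) L B <|
      integrable_prod_mul_comp_sub_mul hKint hC hfXint q fun j => (hδpos n j).ne'
  refine ((isLittleO_integral_smul_comp_mul (integrable_prod_kernel hKmom)
    (isBounded_support_prod (hKsupp.isCompact.isBounded.subset (subset_tsupport K))) hR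
    (tendsto_pi_nhds.2 hδ0)).congr_left hbias).trans_isBigO ?_
  exact IsBigO.of_bound 1 <| Eventually.of_forall fun n => by
    simpa using (sq_norm_le_sum_sq (δ n)).trans (le_abs_self _)

/-- Second-order bias expansion of the multivariate product-kernel density estimator:
the bias minus `(κ₂/2) Σⱼ δ_{n,j}² ∂²f_X/∂xⱼ²(q)` is `o(Σⱼ δ_{n,j}²)`. -/
theorem stmt9 {m : ℕ} (fX : (Fin m → ℝ) → ℝ) (q : Fin m → ℝ)
    (hfX : ContDiffAt ℝ 2 fX q)
    (hfXint : Integrable fX)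
    (K : ℝ → ℝ)
    (hKbdd : ∃ C, ∀ t, |K t| ≤ C) (hKsymm : ∀ t, K (-t) = K t)
    (hKsupp : HasCompactSupport K) (hKnonneg : ∀ t, 0 ≤ K t)
    (hKone : (∫ t, K t) = 1)
    (hKodd : (∫ t, t * K t) = 0)
    (hKsq : Integrable (fun t => t ^ 2 * K t))
    (δ : ℕ → Fin m → ℝ) (hδpos : ∀ n j, 0 < δ n j)
    (hδ0 : ∀ j, Tendsto (fun n => δ n j) atTop (nhds 0)) :
    (fun n : ℕ =>
        ((1 / ∏ j, δ n j) *
            (∫ x : Fin m → ℝ, (∏ j, K ((q j - x j) / δ n j)) * fX x) - fX q)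
          - ((∫ t, t ^ 2 * K t) / 2) *
              ∑ j, (δ n j) ^ 2 *
                deriv (deriv (fun t => fX (Function.update q j t))) (q j))
      =o[atTop] (fun n => ∑ j, (δ n j) ^ 2) :=
  stmt9_general fX q hfX hfXint K hKbdd hKsupp hKone hKodd δ hδpos hδ0
end

section
/- Let F: ℝ → ℝ be a continuous strictly increasing function on a neighborhood 𝒴 of c with F(c) = β, and let F̂_n: ℝ → ℝ be random nondecreasing functions such that F̂_n(y) → F(y) in probability for each y ∈ 𝒴. Define Ŷ_n = inf{y : F̂_n(y) ≥ β}. Then Ŷ_n → c in probability as n → ∞. -/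
/-!
Choose `δ > 0` so small that `c ± δ` lie in `V`; strict monotonicity gives
`F (c - δ) < β < F (c + δ)`. By monotonicity of `F̂_n`, the generalized inverse lies in
`[c - δ, c + δ]` as soon as `F̂_n (c - δ) < β ≤ F̂_n (c + δ)`, and each of the two failing
events has probability tending to `0` by convergence in probability at the two points.
-/

open MeasureTheory Filter Topology Set

theorem csInf_setOf_le_mem_Icc {α β : Type*} [ConditionallyCompleteLinearOrder α] [Preorder β]
    {f : α → β} (hf : Monotone f) {a b : α} {t : β} (ha : f a < t) (hb : t ≤ f b) :
    sInf {y | t ≤ f y} ∈ Icc a b := by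
  have hlower : ∀ y ∈ {y | t ≤ f y}, a ≤ y := fun y hy =>
    le_of_not_ge fun hya => (hy.trans (hf hya)).not_gt ha
  exact ⟨le_csInf ⟨b, hb⟩ hlower, csInf_le ⟨a, hlower⟩ hb⟩

theorem exists_pos_lt_sub_mem_add_mem {V : Set ℝ} {c ε : ℝ} (hV : V ∈ 𝓝 c) (hε : 0 < ε) :
    ∃ δ, 0 < δ ∧ δ < ε ∧ c - δ ∈ V ∧ c + δ ∈ V := by
  have hsub : ∀ᶠ δ in 𝓝 (0 : ℝ), c - δ ∈ V :=
    (continuous_const.sub continuous_id).tendsto' 0 c (sub_zero c) hV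
  have hadd : ∀ᶠ δ in 𝓝 (0 : ℝ), c + δ ∈ V :=
    (continuous_const.add continuous_id).tendsto' 0 c (add_zero c) hV
  obtain ⟨δ, ⟨hδ, hδε⟩, hδsub, hδadd⟩ :=
    (Eventually.and (Ioo_mem_nhdsGT hε) ((hsub.and hadd).filter_mono nhdsWithin_le_nhds)).exists
  exact ⟨δ, hδ, hδε, hδsub, hδadd⟩

namespace MeasureTheory.TendstoInMeasure

variable {Ω ι : Type*} [MeasurableSpace Ω] {μ : Measure Ω} {l : Filter ι} {f : ι → Ω → ℝ}
  {x t : ℝ}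

theorem tendsto_measure_setOf_le (h : TendstoInMeasure μ f l (fun _ => x)) (hxt : x < t) :
    Tendsto (fun i => μ {ω | t ≤ f i ω}) l (𝓝 0) := by
  refine tendsto_of_tendsto_of_tendsto_of_le_of_le tendsto_const_nhds
    (tendstoInMeasure_iff_dist.mp h (t - x) (sub_pos.mpr hxt)) (fun _ => zero_le)
    fun i => measure_mono fun ω (hω : t ≤ f i ω) => ?_
  change t - x ≤ dist (f i ω) x
  rw [Real.dist_eq]
  exact (sub_le_sub_right hω x).trans (le_abs_self _)

theorem tendsto_measure_setOf_lt (h : TendstoInMeasure μ f l (fun _ => x)) (htx : t < x) :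
    Tendsto (fun i => μ {ω | f i ω < t}) l (𝓝 0) := by
  refine tendsto_of_tendsto_of_tendsto_of_le_of_le tendsto_const_nhds
    (tendstoInMeasure_iff_dist.mp h (x - t) (sub_pos.mpr htx)) (fun _ => zero_le)
    fun i => measure_mono fun ω (hω : f i ω < t) => ?_
  change x - t ≤ dist (f i ω) x
  rw [dist_comm, Real.dist_eq]
  exact (sub_le_sub_left hω.le x).trans (le_abs_self _)

end MeasureTheory.TendstoInMeasure

open MeasureTheory.TendstoInMeasure in
theorem tendsto_measure_csInf_setOf_le_notMem_Icc {Ω : Type*} [MeasurableSpace Ω]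
    {μ : Measure Ω} {G : ℕ → Ω → ℝ → ℝ} (hG : ∀ n ω, Monotone (G n ω)) {a b t ya yb : ℝ}
    (ha : TendstoInMeasure μ (fun n ω => G n ω a) atTop (fun _ => ya))
    (hb : TendstoInMeasure μ (fun n ω => G n ω b) atTop (fun _ => yb))
    (hya : ya < t) (hyb : t < yb) :
    Tendsto (fun n => μ {ω | sInf {y | t ≤ G n ω y} ∉ Icc a b}) atTop (𝓝 0) := by
  have hfail : ∀ n, {ω | sInf {y | t ≤ G n ω y} ∉ Icc a b} ⊆
      {ω | t ≤ G n ω a} ∪ {ω | G n ω b < t} := fun n ω hω => by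
    by_contra hgood
    simp only [mem_union, mem_ofPred_eq, not_or, not_le, not_lt] at hgood
    exact hω (csInf_setOf_le_mem_Icc (hG n ω) hgood.1 hgood.2)
  have hboth := (tendsto_measure_setOf_le ha hya).add (tendsto_measure_setOf_lt hb hyb)
  rw [add_zero] at hboth
  exact tendsto_of_tendsto_of_tendsto_of_le_of_le tendsto_const_nhds hboth (fun _ => zero_le) fun n => (measure_mono (hfail n)).trans (measure_union_le _ _)

theorem stmt12_general {Ω : Type*} [MeasurableSpace Ω] (P : Measure Ω)
    (F : ℝ → ℝ) (Fhat : ℕ → Ω → ℝ → ℝ) (c β : ℝ) (V : Set ℝ)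
    (hV : V ∈ nhds c)
    (hFmono : StrictMonoOn F V)
    (hFc : F c = β)
    (hmono : ∀ n ω, Monotone (Fhat n ω))
    (hconv : ∀ y ∈ V, TendstoInMeasure P (fun n ω => Fhat n ω y) atTop (fun _ => F y)) :
    TendstoInMeasure P (fun n ω => sInf {y | β ≤ Fhat n ω y}) atTop (fun _ => c) := by
  rw [tendstoInMeasure_iff_dist]
  intro ε hε
  obtain ⟨δ, hδ, hδε, hlo, hhi⟩ := exists_pos_lt_sub_mem_add_mem hV hε
  have hFlo : F (c - δ) < β := hFc ▸ hFmono hlo (mem_of_mem_nhds hV) (by linarith)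
  have hFhi : β < F (c + δ) := hFc ▸ hFmono (mem_of_mem_nhds hV) hhi (by linarith)
  have hfar : ∀ n, {ω | ε ≤ dist (sInf {y | β ≤ Fhat n ω y}) c} ⊆
      {ω | sInf {y | β ≤ Fhat n ω y} ∉ Icc (c - δ) (c + δ)} := fun n ω hω hnear => by
    have : dist (sInf {y | β ≤ Fhat n ω y}) c ≤ δ := by
      rw [Real.dist_eq, abs_sub_le_iff]
      constructor <;> linarith [hnear.1, hnear.2]
    exact (hω.trans this).not_gt hδε
  exact tendsto_of_tendsto_of_tendsto_of_le_of_le tendsto_const_nhds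
    (tendsto_measure_csInf_setOf_le_notMem_Icc hmono (hconv _ hlo) (hconv _ hhi) hFlo hFhi)
    (fun _ => zero_le) fun n => measure_mono (hfar n)

/-- Consistency of the generalized inverse: if random nondecreasing functions `F̂_n`
converge pointwise in probability on a neighborhood `V` of `c` to a continuous strictly
increasing `F` with `F(c) = β`, then `Ŷ_n = inf{y : F̂_n(y) ≥ β} → c` in probability. -/
theorem stmt12 {Ω : Type*} [MeasurableSpace Ω] (P : Measure Ω)
    [IsProbabilityMeasure P]
    (F : ℝ → ℝ) (Fhat : ℕ → Ω → ℝ → ℝ) (c β : ℝ) (V : Set ℝ)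
    (hV : V ∈ nhds c)
    (hFcont : ContinuousOn F V)
    (hFmono : StrictMonoOn F V)
    (hFc : F c = β)
    (hmono : ∀ n ω, Monotone (Fhat n ω))
    (hmeas : ∀ n, Measurable (fun ω => sInf {y | β ≤ Fhat n ω y}))
    (hconv : ∀ y ∈ V, TendstoInMeasure P (fun n ω => Fhat n ω y) atTop (fun _ => F y)) :
    TendstoInMeasure P (fun n ω => sInf {y | β ≤ Fhat n ω y}) atTop (fun _ => c) :=
  stmt12_general P F Fhat c β V hV hFmono hFc hmono hconv
end
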